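/- The function r ↦ m(r) / (4 E'(r) K(r) − π) is strictly decreasing on (0,1), and it maps (0,1) onto (0, ∞). -/

import Mathlib

/-
Write `r' = √(1 - r²)`. Then `m r = (2/π) (r' K r) (r' K r')`, and both factors are positive and
strictly decreasing: under the integral sign, `r'² / (1 - r² sin² θ)` decreases in `r` and
`s / √(1 - s² sin² θ)` increases in `s`. The denominator `4 E' K - π` is nondecreasing (`K`
increases, `E` decreases) and at least `π`, so the ratio is strictly decreasing.

As `r → 0` the ratio tends to `∞`, because `√(cos² θ + r² sin² θ) ≤ r + π/2 - θ` gives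
`K' r ≥ log (1 + π / (2r))`; as `r → 1` it tends to `0`, because `r' K r ≤ π/2` gives
`m r ≤ (π/2) r' / r`. Continuity and the intermediate value theorem then identify the image.
-/

open Real Set Filter

/-- Complete elliptic integral of the first kind. -/
noncomputable def K (r : ℝ) : ℝ :=
  ∫ θ in (0:ℝ)..(π/2), 1 / Real.sqrt (1 - r^2 * Real.sin θ ^ 2)

/-- Complete elliptic integral of the second kind. -/
noncomputable def E (r : ℝ) : ℝ :=
  ∫ θ in (0:ℝ)..(π/2), Real.sqrt (1 - r^2 * Real.sin θ ^ 2)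

/-- Complementary complete elliptic integral of the first kind: `K'(r) = K(√(1-r²))`. -/
noncomputable def K' (r : ℝ) : ℝ := K (Real.sqrt (1 - r^2))

/-- Complementary complete elliptic integral of the second kind: `E'(r) = E(√(1-r²))`. -/
noncomputable def E' (r : ℝ) : ℝ := E (Real.sqrt (1 - r^2))

/-- The special function `m(r) = (2/π) r'² K(r) K'(r)` (here `r'² = 1 - r²`). -/
noncomputable def m (r : ℝ) : ℝ := (2/π) * (1 - r^2) * K r * K' r

open MeasureTheory Topology

theorem strictMonoOn_intervalIntegral {F : ℝ → ℝ → ℝ} {s : Set ℝ} {a b c : ℝ} (hab : a < b)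
    (hc : c ∈ Icc a b) (hF : ∀ r ∈ s, ContinuousOn (F r) (Icc a b))
    (hmono : ∀ θ ∈ Icc a b, MonotoneOn (F · θ) s) (hstrict : StrictMonoOn (F · c) s) :
    StrictMonoOn (fun r => ∫ θ in a..b, F r θ) s := fun _ hx _ hy hxy =>
  intervalIntegral.integral_lt_integral_of_continuousOn_of_le_of_exists_lt hab (hF _ hx) (hF _ hy)
    (fun θ hθ => hmono θ (Ioc_subset_Icc_self hθ) hx hy hxy.le) ⟨c, hc, hstrict hx hy hxy⟩

theorem strictAntiOn_intervalIntegral {F : ℝ → ℝ → ℝ} {s : Set ℝ} {a b c : ℝ} (hab : a < b)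
    (hc : c ∈ Icc a b) (hF : ∀ r ∈ s, ContinuousOn (F r) (Icc a b))
    (hanti : ∀ θ ∈ Icc a b, AntitoneOn (F · θ) s) (hstrict : StrictAntiOn (F · c) s) :
    StrictAntiOn (fun r => ∫ θ in a..b, F r θ) s := fun _ hx _ hy hxy =>
  intervalIntegral.integral_lt_integral_of_continuousOn_of_le_of_exists_lt hab (hF _ hy) (hF _ hx)
    (fun θ hθ => hanti θ (Ioc_subset_Icc_self hθ) hx hy hxy.le) ⟨c, hc, hstrict hx hy hxy⟩

theorem StrictAntiOn.div_of_monotoneOn {α 𝕜 : Type*} [Preorder α] [Field 𝕜] [LinearOrder 𝕜]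
    [IsStrictOrderedRing 𝕜] {f g : α → 𝕜} {s : Set α}
    (hf : StrictAntiOn f s) (hg : MonotoneOn g s) (hf0 : ∀ x ∈ s, 0 ≤ f x)
    (hg0 : ∀ x ∈ s, 0 < g x) : StrictAntiOn (fun x => f x / g x) s := fun _ ha _ hb hab =>
  div_lt_div₀ (hf ha hb hab) (hg ha hb hab.le) (hf0 _ ha) (hg0 _ ha)

theorem StrictAntiOn.image_Ioo_eq_Ioi {α β : Type*} [ConditionallyCompleteLinearOrder α]
    [TopologicalSpace α] [OrderTopology α] [DenselyOrdered α] [LinearOrder β] [TopologicalSpace β]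
    [OrderClosedTopology β] [NoMaxOrder β] {f : α → β} {a b : α} {c : β} (hab : a < b)
    (hf : StrictAntiOn f (Ioo a b)) (hcont : ContinuousOn f (Ioo a b))
    (ha : Tendsto f (𝓝[>] a) atTop) (hb : Tendsto f (𝓝[<] b) (𝓝 c)) :
    f '' Ioo a b = Ioi c := by
  have : (𝓝[>] a).NeBot := nhdsGT_neBot_of_exists_gt ⟨b, hab⟩
  have : (𝓝[<] b).NeBot := nhdsLT_neBot_of_exists_lt ⟨a, hab⟩
  apply Subset.antisymm
  · rintro _ ⟨x, hx, rfl⟩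
    obtain ⟨y, hxy, hyb⟩ := exists_between hx.2
    have hy : y ∈ Ioo a b := ⟨hx.1.trans hxy, hyb⟩
    have hcy : c ≤ f y := le_of_tendsto hb <| by
      filter_upwards [Ioo_mem_nhdsLT hyb] with z hz
      exact (hf hy ⟨hy.1.trans hz.1, hz.2⟩ hz.1).le
    exact hcy.trans_lt (hf hx hy hxy)
  · intro y hy
    obtain ⟨x₁, hx₁y, hx₁⟩ := ((ha.eventually_gt_atTop y).and (Ioo_mem_nhdsGT hab)).exists
    obtain ⟨x₂, hx₂y, hx₂⟩ := ((hb.eventually_lt_const hy).and (Ioo_mem_nhdsLT hx₁.2)).exists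
    have hsub : Icc x₁ x₂ ⊆ Ioo a b := Icc_subset_Ioo hx₁.1 hx₂.2
    obtain ⟨x, hx, rfl⟩ := intermediate_value_Icc' hx₂.1.le (hcont.mono hsub) ⟨hx₂y.le, hx₁y.le⟩
    exact ⟨x, hsub hx, rfl⟩

theorem sq_lt_one_of_mem_Ico {r : ℝ} (hr : r ∈ Ico (0 : ℝ) 1) : r ^ 2 < 1 := by
  nlinarith [hr.1, hr.2]

theorem sq_le_one_of_mem_Ioo {r : ℝ} (hr : r ∈ Ioo (0 : ℝ) 1) : r ^ 2 ≤ 1 :=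
  (sq_lt_one_of_mem_Ico (Ioo_subset_Ico_self hr)).le

theorem sqrt_one_sub_sq_mem_Ioo {r : ℝ} (hr : r ∈ Ioo (0 : ℝ) 1) : √(1 - r ^ 2) ∈ Ioo 0 1 := by
  obtain ⟨h0, h1⟩ := hr
  exact ⟨sqrt_pos.2 (by nlinarith), (sqrt_lt' one_pos).2 (by nlinarith)⟩

theorem sqrt_one_sub_sq_sqrt_one_sub_sq {r : ℝ} (hr : r ∈ Icc (0 : ℝ) 1) :
    √(1 - √(1 - r ^ 2) ^ 2) = r := by
  rw [sq_sqrt (by nlinarith [hr.1, hr.2]), sub_sub_cancel, sqrt_sq hr.1]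

theorem strictAntiOn_sqrt_one_sub_sq : StrictAntiOn (fun r => √(1 - r ^ 2)) (Icc 0 1) := by
  intro a ha b hb hab
  have : a ^ 2 < b ^ 2 := pow_lt_pow_left₀ hab ha.1 two_ne_zero
  exact sqrt_lt_sqrt (by nlinarith [hb.2, hb.1]) (by linarith)

theorem one_sub_sq_mul_sin_sq_pos {r : ℝ} (hr : r ^ 2 < 1) (θ : ℝ) :
    0 < 1 - r ^ 2 * sin θ ^ 2 := by
  nlinarith [sin_sq_le_one θ, sq_nonneg r]

theorem continuous_K_integrand {r : ℝ} (hr : r ^ 2 < 1) :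
    Continuous fun θ => 1 / √(1 - r ^ 2 * sin θ ^ 2) :=
  continuous_const.div (by fun_prop) fun θ => (sqrt_pos.2 (one_sub_sq_mul_sin_sq_pos hr θ)).ne'

theorem continuousOn_K : ContinuousOn K (Ioo (-1) 1) := by
  rw [continuousOn_iff_continuous_domRestrict]
  refine intervalIntegral.continuous_parametric_intervalIntegral_of_continuous'
    (f := fun (r : Ioo (-1 : ℝ) 1) θ => 1 / √(1 - (r : ℝ) ^ 2 * sin θ ^ 2)) ?_ 0 (π / 2)
  refine continuous_const.div (by fun_prop) fun p => (sqrt_pos.2 ?_).ne'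
  exact one_sub_sq_mul_sin_sq_pos (sq_lt_one_iff_abs_lt_one _ |>.2 (abs_lt.2 p.1.2)) _

theorem continuous_E : Continuous E :=
  intervalIntegral.continuous_parametric_intervalIntegral_of_continuous' (by fun_prop) 0 (π / 2)

theorem K_zero : K 0 = π / 2 := by simp [K]

theorem E_zero : E 0 = π / 2 := by simp [E]

theorem E_one : E 1 = 1 := by
  have hcos : ∀ θ ∈ uIcc 0 (π / 2), √(1 - 1 ^ 2 * sin θ ^ 2) = cos θ := fun θ hθ => by
    rw [uIcc_of_le (by positivity)] at hθ
    rw [one_pow, one_mul, ← cos_sq',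
      sqrt_sq (cos_nonneg_of_mem_Icc ⟨by linarith [hθ.1, pi_pos], hθ.2⟩)]
  rw [E, intervalIntegral.integral_congr hcos, integral_cos]
  simp

theorem monotoneOn_K_integrand (θ : ℝ) :
    MonotoneOn (fun r => 1 / √(1 - r ^ 2 * sin θ ^ 2)) (Ico 0 1) := by
  intro a ha b hb hab
  have hb' := one_sub_sq_mul_sin_sq_pos (sq_lt_one_of_mem_Ico hb) θ
  refine one_div_le_one_div_of_le (sqrt_pos.2 hb') (sqrt_le_sqrt ?_)
  have : a ^ 2 ≤ b ^ 2 := pow_le_pow_left₀ ha.1 hab 2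
  nlinarith [sq_nonneg (sin θ)]

theorem strictMonoOn_K : StrictMonoOn K (Ico 0 1) := by
  refine strictMonoOn_intervalIntegral (c := π / 2) (by positivity) ⟨by positivity, le_rfl⟩
    (fun r hr => (continuous_K_integrand (sq_lt_one_of_mem_Ico hr)).continuousOn)
    (fun θ _ => monotoneOn_K_integrand θ) ?_
  intro a ha b hb hab
  have hb' := one_sub_sq_mul_sin_sq_pos (sq_lt_one_of_mem_Ico hb) (π / 2)
  refine one_div_lt_one_div_of_lt (sqrt_pos.2 hb') (sqrt_lt_sqrt hb'.le ?_)
  have : a ^ 2 < b ^ 2 := pow_lt_pow_left₀ hab ha.1 two_ne_zero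
  simp only [sin_pi_div_two]
  linarith

theorem strictAntiOn_E : StrictAntiOn E (Icc 0 1) := by
  refine strictAntiOn_intervalIntegral (c := π / 2) (by positivity) ⟨by positivity, le_rfl⟩
    (fun r _ => by fun_prop) ?_ ?_
  · intro θ _ a ha b hb hab
    refine sqrt_le_sqrt ?_
    have : a ^ 2 ≤ b ^ 2 := pow_le_pow_left₀ ha.1 hab 2
    nlinarith [sq_nonneg (sin θ)]
  · intro a ha b hb hab
    have : a ^ 2 < b ^ 2 := pow_lt_pow_left₀ hab ha.1 two_ne_zero
    simp only [sin_pi_div_two, one_pow, mul_one]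
    exact sqrt_lt_sqrt (by nlinarith [hb.2, hb.1]) (by linarith)

theorem strictMonoOn_E' : StrictMonoOn E' (Icc 0 1) :=
  strictAntiOn_E.comp strictAntiOn_sqrt_one_sub_sq fun r hr =>
    ⟨sqrt_nonneg _, sqrt_le_one.2 (by nlinarith [hr.1])⟩

theorem strictMonoOn_mul_K : StrictMonoOn (fun s => s * K s) (Ico 0 1) := by
  simp only [K, ← intervalIntegral.integral_const_mul]
  refine strictMonoOn_intervalIntegral (c := 0) (by positivity) ⟨le_rfl, by positivity⟩
    (fun r hr => (continuous_const.mul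
      (continuous_K_integrand (sq_lt_one_of_mem_Ico hr))).continuousOn) ?_ ?_
  · intro θ _ a ha b hb hab
    exact mul_le_mul hab (monotoneOn_K_integrand θ ha hb hab) (by positivity) hb.1
  · intro a _ b _ hab
    simpa using hab

theorem strictAntiOn_sqrt_one_sub_sq_mul_K :
    StrictAntiOn (fun r => √(1 - r ^ 2) * K r) (Ico 0 1) := by
  simp only [K, ← intervalIntegral.integral_const_mul]
  refine strictAntiOn_intervalIntegral (c := 0) (by positivity) ⟨le_rfl, by positivity⟩
    (fun r hr => (continuous_const.mul
      (continuous_K_integrand (sq_lt_one_of_mem_Ico hr))).continuousOn) ?_ ?_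
  · intro θ _ a ha b hb hab
    have ha' := one_sub_sq_mul_sin_sq_pos (sq_lt_one_of_mem_Ico ha) θ
    have hb' := one_sub_sq_mul_sin_sq_pos (sq_lt_one_of_mem_Ico hb) θ
    -- `(1 - r²) / (1 - r² sin² θ)` is antitone in `r²` because `sin² θ ≤ 1`
    simp only [mul_one_div, ← sqrt_div' _ ha'.le, ← sqrt_div' _ hb'.le]
    refine sqrt_le_sqrt ((div_le_div_iff₀ hb' ha').2 ?_)
    have : a ^ 2 ≤ b ^ 2 := pow_le_pow_left₀ ha.1 hab 2
    nlinarith [sin_sq_le_one θ]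
  · intro a ha b hb hab
    have : a ^ 2 < b ^ 2 := pow_lt_pow_left₀ hab ha.1 two_ne_zero
    simpa using sqrt_lt_sqrt (by nlinarith [hb.2, hb.1]) (by linarith : 1 - b ^ 2 < 1 - a ^ 2)

theorem pi_div_two_le_K {r : ℝ} (hr : r ∈ Ico (0 : ℝ) 1) : π / 2 ≤ K r :=
  K_zero ▸ strictMonoOn_K.monotoneOn ⟨le_rfl, one_pos⟩ hr hr.1

theorem pi_div_two_le_K' {r : ℝ} (hr : r ∈ Ioo (0 : ℝ) 1) : π / 2 ≤ K' r :=
  pi_div_two_le_K (Ioo_subset_Ico_self (sqrt_one_sub_sq_mem_Ioo hr))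

theorem one_le_E {r : ℝ} (hr : r ∈ Icc (0 : ℝ) 1) : 1 ≤ E r :=
  E_one ▸ strictAntiOn_E.antitoneOn hr ⟨zero_le_one, le_rfl⟩ hr.2

theorem E_le_pi_div_two {r : ℝ} (hr : r ∈ Icc (0 : ℝ) 1) : E r ≤ π / 2 :=
  E_zero ▸ strictAntiOn_E.antitoneOn ⟨le_rfl, zero_le_one⟩ hr hr.1

theorem sqrt_one_sub_sq_mul_K_le {r : ℝ} (hr : r ∈ Ico (0 : ℝ) 1) : √(1 - r ^ 2) * K r ≤ π / 2 := by
  simpa [K_zero] using strictAntiOn_sqrt_one_sub_sq_mul_K.antitoneOn ⟨le_rfl, one_pos⟩ hr hr.1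

theorem K'_le {r : ℝ} (hr : r ∈ Ioo (0 : ℝ) 1) : K' r ≤ π / 2 / r := by
  have h := sqrt_one_sub_sq_mul_K_le (Ioo_subset_Ico_self (sqrt_one_sub_sq_mem_Ioo hr))
  rw [sqrt_one_sub_sq_sqrt_one_sub_sq (Ioo_subset_Icc_self hr)] at h
  exact (le_div_iff₀' hr.1).2 h

theorem log_add_pi_div_two_div_le_K' {r : ℝ} (hr : r ∈ Ioo (0 : ℝ) 1) :
    log ((r + π / 2) / r) ≤ K' r := by
  have hr2 : 0 ≤ 1 - r ^ 2 := by nlinarith [hr.1, hr.2]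
  have hden : ∀ θ ∈ Icc 0 (π / 2), 0 < r + π / 2 - θ := fun θ hθ => by linarith [hr.1, hθ.2]
  -- `√(cos² θ + r² sin² θ) ≤ r + cos θ ≤ r + (π/2 - θ)`
  have hle : ∀ θ ∈ Icc 0 (π / 2),
      1 / (r + π / 2 - θ) ≤ 1 / √(1 - √(1 - r ^ 2) ^ 2 * sin θ ^ 2) := fun θ hθ => by
    have hcos : 0 ≤ cos θ := cos_nonneg_of_mem_Icc ⟨by linarith [hθ.1, pi_pos], hθ.2⟩
    have hcos_le : cos θ ≤ π / 2 - θ := sin_pi_div_two_sub θ ▸ sin_le (by linarith [hθ.2])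
    have hrad : 0 < 1 - √(1 - r ^ 2) ^ 2 * sin θ ^ 2 := by
      rw [sq_sqrt hr2]; nlinarith [hr.1, sin_sq_add_cos_sq θ, sin_sq_le_one θ]
    refine one_div_le_one_div_of_le (sqrt_pos.2 hrad)
      ((sqrt_le_iff (y := r + cos θ)).2 ⟨?_, ?_⟩ |>.trans ?_)
    · linarith [hr.1]
    · rw [sq_sqrt hr2]
      nlinarith [hr.1, sin_sq_add_cos_sq θ, mul_nonneg hr.1.le hcos, sq_nonneg (sin θ)]
    · linarith
  have hint : IntervalIntegrable (fun θ => 1 / (r + π / 2 - θ)) volume 0 (π / 2) := by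
    refine ContinuousOn.intervalIntegrable (continuousOn_const.div (by fun_prop) fun θ hθ => ?_)
    rw [uIcc_of_le (by positivity)] at hθ
    exact (hden θ hθ).ne'
  have hlog : ∫ θ in (0 : ℝ)..π / 2, 1 / (r + π / 2 - θ) = log ((r + π / 2) / r) := by
    rw [intervalIntegral.integral_comp_sub_left (fun x => 1 / x), add_sub_cancel_right, sub_zero,
      integral_one_div_of_pos hr.1 (by linarith [hr.1, pi_pos])]
  rw [← hlog, K', K]
  exact intervalIntegral.integral_mono_on (by positivity) hint
    ((continuous_K_integrand (by rw [sq_sqrt hr2]; nlinarith [hr.1])).intervalIntegrable _ _) hle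

theorem tendsto_K'_nhdsGT_zero : Tendsto K' (𝓝[>] 0) atTop := by
  have hlog : Tendsto (fun r => log ((r + π / 2) / r)) (𝓝[>] 0) atTop := by
    have h : Tendsto (fun r : ℝ => 1 + π / 2 * r⁻¹) (𝓝[>] 0) atTop :=
      tendsto_atTop_add_const_left _ 1 (tendsto_inv_nhdsGT_zero.const_mul_atTop (by positivity))
    refine tendsto_log_atTop.comp (h.congr' ?_)
    filter_upwards [self_mem_nhdsWithin] with r (hr : 0 < r)
    field_simp
  refine tendsto_atTop_mono' _ ?_ hlog
  filter_upwards [Ioo_mem_nhdsGT one_pos] with r hr using log_add_pi_div_two_div_le_K' hr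

theorem m_eq {r : ℝ} (hr : r ^ 2 ≤ 1) :
    m r = 2 / π * (√(1 - r ^ 2) * K r) * (√(1 - r ^ 2) * K' r) := by
  rw [m]
  linear_combination (2 / π * K r * K' r) * (mul_self_sqrt (sub_nonneg.2 hr)).symm

theorem strictAntiOn_sqrt_one_sub_sq_mul_K' :
    StrictAntiOn (fun r => √(1 - r ^ 2) * K' r) (Ioo 0 1) :=
  strictMonoOn_mul_K.comp_strictAntiOn (strictAntiOn_sqrt_one_sub_sq.mono Ioo_subset_Icc_self)
    fun _ hr => Ioo_subset_Ico_self (sqrt_one_sub_sq_mem_Ioo hr)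

theorem sqrt_one_sub_sq_mul_K_pos {r : ℝ} (hr : r ∈ Ioo (0 : ℝ) 1) : 0 < √(1 - r ^ 2) * K r :=
  mul_pos (sqrt_one_sub_sq_mem_Ioo hr).1
    (by linarith [pi_div_two_le_K (Ioo_subset_Ico_self hr), pi_pos])

theorem sqrt_one_sub_sq_mul_K'_pos {r : ℝ} (hr : r ∈ Ioo (0 : ℝ) 1) : 0 < √(1 - r ^ 2) * K' r :=
  mul_pos (sqrt_one_sub_sq_mem_Ioo hr).1 (by linarith [pi_div_two_le_K' hr, pi_pos])

theorem m_pos {r : ℝ} (hr : r ∈ Ioo (0 : ℝ) 1) : 0 < m r := by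
  have := sqrt_one_sub_sq_mul_K_pos hr
  have := sqrt_one_sub_sq_mul_K'_pos hr
  rw [m_eq (sq_le_one_of_mem_Ioo hr)]
  positivity

theorem strictAntiOn_m : StrictAntiOn m (Ioo 0 1) := by
  intro a ha b hb hab
  rw [m_eq (sq_le_one_of_mem_Ioo ha), m_eq (sq_le_one_of_mem_Ioo hb)]
  have hA :=
    strictAntiOn_sqrt_one_sub_sq_mul_K (Ioo_subset_Ico_self ha) (Ioo_subset_Ico_self hb) hab
  have hB := strictAntiOn_sqrt_one_sub_sq_mul_K' ha hb hab
  have := sqrt_one_sub_sq_mul_K_pos hb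
  exact mul_lt_mul'' (mul_lt_mul_of_pos_left hA (by positivity)) hB (by positivity)
    (sqrt_one_sub_sq_mul_K'_pos hb).le

theorem monotoneOn_four_mul_E'_mul_K_sub_pi :
    MonotoneOn (fun r => 4 * E' r * K r - π) (Ioo 0 1) := by
  intro a ha b hb hab
  have hE' := strictMonoOn_E'.monotoneOn (Ioo_subset_Icc_self ha) (Ioo_subset_Icc_self hb) hab
  have hK := strictMonoOn_K.monotoneOn (Ioo_subset_Ico_self ha) (Ioo_subset_Ico_self hb) hab
  have := pi_div_two_le_K (Ioo_subset_Ico_self ha)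
  have : 1 ≤ E' a := one_le_E (Ioo_subset_Icc_self (sqrt_one_sub_sq_mem_Ioo ha))
  nlinarith [pi_pos]

theorem pi_le_four_mul_E'_mul_K_sub_pi {r : ℝ} (hr : r ∈ Ioo (0 : ℝ) 1) :
    π ≤ 4 * E' r * K r - π := by
  have hK := pi_div_two_le_K (Ioo_subset_Ico_self hr)
  have hE' : 1 ≤ E' r := one_le_E (Ioo_subset_Icc_self (sqrt_one_sub_sq_mem_Ioo hr))
  nlinarith [pi_pos]

noncomputable def mRatio (r : ℝ) : ℝ := m r / (4 * E' r * K r - π)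

theorem strictAntiOn_mRatio : StrictAntiOn mRatio (Ioo 0 1) :=
  strictAntiOn_m.div_of_monotoneOn monotoneOn_four_mul_E'_mul_K_sub_pi (fun _ hr => (m_pos hr).le)
    fun _ hr => pi_pos.trans_le (pi_le_four_mul_E'_mul_K_sub_pi hr)

theorem continuousOn_mRatio : ContinuousOn mRatio (Ioo 0 1) := by
  have hK : ContinuousOn K (Ioo 0 1) := continuousOn_K.mono (Ioo_subset_Ioo_left (by norm_num))
  have hK' : ContinuousOn K' (Ioo 0 1) := continuousOn_K.comp (by fun_prop) fun r hr =>
    Ioo_subset_Ioo_left (by norm_num) (sqrt_one_sub_sq_mem_Ioo hr)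
  have hE' : Continuous E' := continuous_E.comp (by fun_prop)
  have hm : ContinuousOn m (Ioo 0 1) := by unfold m; fun_prop
  exact hm.div (by fun_prop) fun r hr => (pi_pos.trans_le (pi_le_four_mul_E'_mul_K_sub_pi hr)).ne'

theorem mul_K'_le_mRatio {r : ℝ} (hr : r ∈ Ioo (0 : ℝ) 1) :
    (1 - r ^ 2) / π ^ 2 * K' r ≤ mRatio r := by
  have hK := pi_div_two_le_K (Ioo_subset_Ico_self hr)
  have hK' := pi_div_two_le_K' hr
  have hE' : E' r ≤ π / 2 := E_le_pi_div_two (Ioo_subset_Icc_self (sqrt_one_sub_sq_mem_Ioo hr))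
  have hD := pi_le_four_mul_E'_mul_K_sub_pi hr
  have hr2 : 0 ≤ 1 - r ^ 2 := sub_nonneg.2 (sq_le_one_of_mem_Ioo hr)
  rw [mRatio, le_div_iff₀ (pi_pos.trans_le hD)]
  calc (1 - r ^ 2) / π ^ 2 * K' r * (4 * E' r * K r - π)
      ≤ (1 - r ^ 2) / π ^ 2 * K' r * (2 * π * K r) := by
        gcongr
        · exact mul_nonneg (by positivity) (by linarith [pi_pos])
        · nlinarith [pi_pos]
    _ = m r := by rw [m]; field_simp

theorem tendsto_mRatio_nhdsGT_zero : Tendsto mRatio (𝓝[>] 0) atTop := by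
  have h : Tendsto (fun r : ℝ => (1 - r ^ 2) / π ^ 2) (𝓝[>] 0) (𝓝 ((1 - 0 ^ 2) / π ^ 2)) :=
    ((by fun_prop : Continuous fun r : ℝ => (1 - r ^ 2) / π ^ 2).tendsto 0).mono_left
      nhdsWithin_le_nhds
  refine tendsto_atTop_mono' _ ?_ (h.pos_mul_atTop (by positivity) tendsto_K'_nhdsGT_zero)
  filter_upwards [Ioo_mem_nhdsGT one_pos] with r hr using mul_K'_le_mRatio hr

theorem mRatio_le_sqrt_one_sub_sq_div {r : ℝ} (hr : r ∈ Ioo (0 : ℝ) 1) :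
    mRatio r ≤ √(1 - r ^ 2) / (2 * r) := by
  have hA := sqrt_one_sub_sq_mul_K_le (Ioo_subset_Ico_self hr)
  have hK' := K'_le hr
  have hK'0 : 0 ≤ √(1 - r ^ 2) * K' r := (sqrt_one_sub_sq_mul_K'_pos hr).le
  have hm : m r ≤ π / 2 * (√(1 - r ^ 2) / r) :=
    calc m r = 2 / π * (√(1 - r ^ 2) * K r) * (√(1 - r ^ 2) * K' r) :=
          m_eq (sq_le_one_of_mem_Ioo hr)
      _ ≤ 2 / π * (π / 2) * (√(1 - r ^ 2) * (π / 2 / r)) := by gcongr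
      _ = π / 2 * (√(1 - r ^ 2) / r) := by field_simp
  calc mRatio r ≤ m r / π :=
        div_le_div_of_nonneg_left (m_pos hr).le pi_pos (pi_le_four_mul_E'_mul_K_sub_pi hr)
    _ ≤ π / 2 * (√(1 - r ^ 2) / r) / π := by gcongr
    _ = √(1 - r ^ 2) / (2 * r) := by field_simp

theorem tendsto_mRatio_nhdsLT_one : Tendsto mRatio (𝓝[<] 1) (𝓝 0) := by
  have h : Tendsto (fun r : ℝ => √(1 - r ^ 2) / (2 * r)) (𝓝[<] 1) (𝓝 0) := by
    have := ((by fun_prop : Continuous fun r : ℝ => √(1 - r ^ 2)).tendsto 1).div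
      (tendsto_id.const_mul (2 : ℝ)) (by norm_num : (2 : ℝ) * 1 ≠ 0)
    simpa [Pi.div_def] using this.mono_left nhdsWithin_le_nhds
  refine tendsto_of_tendsto_of_tendsto_of_le_of_le' tendsto_const_nhds h ?_ ?_ <;>
    filter_upwards [Ioo_mem_nhdsLT one_pos] with r hr
  · exact div_nonneg (m_pos hr).le (pi_pos.trans_le (pi_le_four_mul_E'_mul_K_sub_pi hr)).le
  · exact mRatio_le_sqrt_one_sub_sq_div hr

theorem stmt_17 :
    StrictAntiOn (fun r : ℝ => m r / (4 * E' r * K r - π)) (Set.Ioo (0:ℝ) 1) ∧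
    (fun r : ℝ => m r / (4 * E' r * K r - π)) '' Set.Ioo (0:ℝ) 1 = Set.Ioi (0:ℝ) :=
  ⟨strictAntiOn_mRatio, strictAntiOn_mRatio.image_Ioo_eq_Ioi one_pos continuousOn_mRatio
    tendsto_mRatio_nhdsGT_zero tendsto_mRatio_nhdsLT_one⟩
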